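/- Let 0 < s < T, τ*_s := τ* ∧ s, σ_s := ρ^{Root} ∧ (T − τ*_s). Then E^λ_y[|X_{σ_s} − Y_{τ*_s}|] = E^λ_y[|X_{σ_s} − Y_{τ*_{s−1}}| + 1_{X_{σ_s} = Y_{τ*_{s−1}},\, τ* ≥ s}], and moreover E^λ_y[|X_{σ_{s−1}} − Y_{τ*_{s−1}}|] = E^λ_y[|X_{σ_s} − Y_{τ*_{s−1}}| + 1_{X_{σ_s} = Y_{τ*_{s−1}},\, τ* ≥ s,\, ρ^{Root} > T−s}], where in fact on the event {X_{σ_s} = Y_{τ*_{s−1}}, τ* ≥ s} one automatically has ρ^{Root} > T − s. -/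

import Mathlib

/-!
Both identities come from one switching argument. Flipping the sign of a single increment
(`η_{s−1}` for the first identity, `ξ_{T−s}` for the second) preserves the joint law of the
independent fair increments. It also leaves unchanged an integer `Z` and an event `B` such that the
left integrand is `|Z + 1_B c|`, with `c` the flipped increment, and the right integrand is
`|Z| + 1_{Z = 0, B}`. Since `|Z + 1| + |Z − 1| = 2 (|Z| + 1_{Z = 0})`, the difference of the two
integrands changes sign under the flip, so its expectation vanishes; it is bounded by `1`, hence
integrable. For the first identity `Z = Y_{τ*_{s−1}} − X_{σ_s}` and `B = {τ* ≥ s}`, because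
`Y_{τ*_s} = Y_{τ*_{s−1}} + 1_B η_{s−1}`. For the second `Z = X_{σ_s} − Y_{τ*_{s−1}}` and
`B = {τ* ≥ s, ρ^{Root} > T − s}`, because `X_{σ_{s−1}} = X_{σ_s} + 1_B ξ_{T−s}`.

The last claim is the Root property: on `{τ* ≥ s}` the point `(T − s + 1, Y_{s−1})` lies in `D`, so
if `X_{σ_s} = Y_{s−1}` then `(σ_s, X_{σ_s}) ∈ D`, and `σ_s` can only be the cap `T − s`.
-/

open MeasureTheory ProbabilityTheory

noncomputable section

namespace SwitchingIdentities

variable {Ω : Type*} [MeasurableSpace Ω]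

/-- The increment `ξ` has the fair `±1` law. -/
def FairSign (P : Measure Ω) (ξ : Ω → ℤ) : Prop :=
  P {ω | ξ ω = 1} = 1 / 2 ∧ P {ω | ξ ω = -1} = 1 / 2

/-- `ξ` and `η` are the increment families of two independent simple symmetric random
walks on `ℤ`: all increments are measurable, fair `±1` coins, and the whole family
`(ξ₀, ξ₁, …, η₀, η₁, …)` is independent. -/
def IndepSSRWIncrements (P : Measure Ω) (ξ η : ℕ → Ω → ℤ) : Prop :=
  (∀ n, Measurable (ξ n)) ∧ (∀ n, Measurable (η n)) ∧
  (∀ n, FairSign P (ξ n)) ∧ (∀ n, FairSign P (η n)) ∧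
  iIndepFun (Sum.elim ξ η) P

/-- The random walk with increments `ξ` started at `x`. -/
def walk (ξ : ℕ → Ω → ℤ) (x : ℤ) (t : ℕ) (ω : Ω) : ℤ :=
  x + ∑ i ∈ Finset.range t, ξ i ω

/-- A Root continuation set: if `(t,m) ∈ D` then `(s,m) ∈ D` for all `s < t`. -/
def IsRootCont {α : Type*} (D : Set (ℕ × α)) : Prop :=
  ∀ t m, (t, m) ∈ D → ∀ s, s < t → (s, m) ∈ D

/-- A Rost continuation set: if `(t,m) ∈ D` then `(s,m) ∈ D` for all `s > t`. -/
def IsRostCont {α : Type*} (D : Set (ℕ × α)) : Prop :=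
  ∀ t m, (t, m) ∈ D → ∀ s, t < s → (s, m) ∈ D

/-- `hit D Z ω = inf {t : (t, Z_t) ∉ D}` (junk value `0` if the walk never leaves `D`). -/
def hit {α : Type*} (D : Set (ℕ × α)) (Z : ℕ → Ω → α) (ω : Ω) : ℕ :=
  sInf {t | (t, Z t ω) ∉ D}

/-- `hitBy D Z n ω = inf {t : (t, Z_t) ∉ D} ∧ n` (equal to `n` if the walk never leaves `D`). -/
def hitBy {α : Type*} (D : Set (ℕ × α)) (Z : ℕ → Ω → α) (n : ℕ) (ω : Ω) : ℕ :=
  sInf ({t | (t, Z t ω) ∉ D} ∪ {n})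

/-- `revHitBy D Z T ω = inf {t : (T − t, Z_t) ∉ D} ∧ T`, the exit time of the time-reversed
space-time walk, capped at `T`. -/
def revHitBy {α : Type*} (D : Set (ℕ × α)) (Z : ℕ → Ω → α) (T : ℕ) (ω : Ω) : ℕ :=
  sInf ({t | (T - t, Z t ω) ∉ D} ∪ {T})

/-- The potential function `U_m(z) = −∑_x |z − x| m({x})` of a measure `m` on `ℤ`. -/
def potential (m : Measure ℤ) (z : ℤ) : ℝ :=
  -∑' w : ℤ, (|z - w| : ℤ) * (m {w}).toReal

/-- A measure on `ℤ` has a finite first moment. -/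
def FiniteFirstMoment (m : Measure ℤ) : Prop :=
  Integrable (fun z : ℤ => (z : ℝ)) m

/-- `τ` is a stopping time of the natural filtration of the process `Z`:
`{τ ≤ n} ∈ σ(Z_0, …, Z_n)` for every `n`. -/
def IsNatStopping {α : Type*} [MeasurableSpace α] (Z : ℕ → Ω → α) (τ : Ω → ℕ) : Prop :=
  ∀ n : ℕ,
    MeasurableSet[MeasurableSpace.comap (fun ω => (fun i : Fin (n + 1) => Z i ω)) inferInstance]
      {ω | τ ω ≤ n}

/-- The law `μ^{Root}` of `X_{ρ^{Root}}` where `X` has increments `ξ` and `X_0 ∼ λ`. -/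
def muRoot (P : Measure Ω) (ξ : ℕ → Ω → ℤ) (D : Set (ℕ × ℤ)) (lam : Measure ℤ) : Measure ℤ :=
  Measure.map (fun p : ℤ × Ω => walk ξ p.1 (hit D (walk ξ p.1) p.2) p.2) (lam.prod P)

/-- The law `μ^{Root}_T` of `X_{ρ^{Root} ∧ T}` where `X` has increments `ξ` and `X_0 ∼ λ`. -/
def muRootT (P : Measure Ω) (ξ : ℕ → Ω → ℤ) (D : Set (ℕ × ℤ)) (lam : Measure ℤ) (T : ℕ) :
    Measure ℤ :=
  Measure.map (fun p : ℤ × Ω => walk ξ p.1 (hitBy D (walk ξ p.1) T p.2) p.2) (lam.prod P)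

end SwitchingIdentities

namespace ProbabilityTheory

variable {ι Ω β : Type*} {mΩ : MeasurableSpace Ω} [MeasurableSpace β] {P : Measure Ω}
  {X : ι → Ω → β}

lemma iIndepFun.map_fun_comp_eq (hX : iIndepFun X P) (hXm : ∀ i, Measurable (X i))
    {g : ι → β → β} (hg : ∀ i, Measurable (g i)) (hlaw : ∀ i, P.map (g i ∘ X i) = P.map (X i)) :
    P.map (fun ω i => g i (X i ω)) = P.map (fun ω i => X i ω) :=
  calc P.map (fun ω i => g i (X i ω))
      = Measure.infinitePi (fun i => P.map (g i ∘ X i)) :=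
        (hX.comp g hg).map_fun_eq_infinitePi_map fun i => (hg i).comp (hXm i)
    _ = Measure.infinitePi (fun i => P.map (X i)) := by simp_rw [hlaw]
    _ = P.map (fun ω i => X i ω) := (hX.map_fun_eq_infinitePi_map hXm).symm

end ProbabilityTheory

namespace MeasureTheory

variable {β γ : Type*} [MeasurableSpace β] [MeasurableSpace γ] {μ : Measure β}

lemma integral_eq_zero_of_map_eq_of_ae_neg {W W' : β → γ} (hW : Measurable W)
    (hW' : Measurable W') (hlaw : μ.map W' = μ.map W) {Φ : γ → ℝ} (hΦ : Measurable Φ)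
    (hneg : ∀ᵐ a ∂μ, Φ (W' a) = -Φ (W a)) : ∫ a, Φ (W a) ∂μ = 0 := by
  have hsame : ∫ a, Φ (W' a) ∂μ = ∫ a, Φ (W a) ∂μ := by
    rw [← integral_map hW'.aemeasurable hΦ.aestronglyMeasurable, hlaw,
      integral_map hW.aemeasurable hΦ.aestronglyMeasurable]
  rw [integral_congr_ae hneg, integral_neg] at hsame
  linarith

lemma integral_eq_of_integrable_sub {f g : β → ℝ} (hfg : Integrable (f - g) μ)
    (h : ∫ a, (f - g) a ∂μ = 0) : ∫ a, f a ∂μ = ∫ a, g a ∂μ := by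
  by_cases hf : Integrable f μ
  · have hg : Integrable g μ := by simpa using hf.sub hfg
    rwa [← sub_eq_zero, ← integral_sub hf hg]
  · have hg : ¬Integrable g μ := fun hg => hf (by simpa using hfg.add hg)
    rw [integral_undef hf, integral_undef hg]

end MeasureTheory

namespace SwitchingIdentities

section Hitting

variable {Ω α : Type*} {D : Set (ℕ × α)} {Z Z' : ℕ → Ω → α} {ω ω' : Ω} {n r t : ℕ}

lemma hitBy_le : hitBy D Z n ω ≤ n := Nat.sInf_le (Or.inr rfl)

lemma hitBy_notMem_or_eq :
    (hitBy D Z n ω, Z (hitBy D Z n ω) ω) ∉ D ∨ hitBy D Z n ω = n :=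
  Nat.sInf_mem (s := {t | (t, Z t ω) ∉ D} ∪ {n}) ⟨n, Or.inr rfl⟩

lemma mem_of_lt_hitBy (h : t < hitBy D Z n ω) : (t, Z t ω) ∈ D := by
  by_contra hD
  exact Nat.notMem_of_lt_sInf h (Or.inl hD)

lemma hitBy_le_of_notMem (h : (t, Z t ω) ∉ D) : hitBy D Z n ω ≤ t := Nat.sInf_le (Or.inl h)

lemma hitBy_eq_self (h : ∀ t < n, (t, Z t ω) ∈ D) : hitBy D Z n ω = n := by
  by_contra hne
  exact hitBy_notMem_or_eq.resolve_right hne (h _ (hitBy_le.lt_of_ne hne))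

lemma forall_mem_of_hitBy_mem (h : (hitBy D Z n ω, Z (hitBy D Z n ω) ω) ∈ D) :
    ∀ t ≤ n, (t, Z t ω) ∈ D := by
  have hn : hitBy D Z n ω = n := hitBy_notMem_or_eq.resolve_left (not_not.mpr h)
  intro t ht
  rcases ht.lt_or_eq with ht | rfl
  · exact mem_of_lt_hitBy (hn ▸ ht)
  · exact hn ▸ h

lemma hitBy_succ_of_exists_notMem (h : ∃ t ≤ n, (t, Z t ω) ∉ D) :
    hitBy D Z (n + 1) ω = hitBy D Z n ω := by
  obtain ⟨t, ht, hD⟩ := h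
  have hexit : (hitBy D Z n ω, Z (hitBy D Z n ω) ω) ∉ D := by
    refine hitBy_notMem_or_eq.elim id fun hn => ?_
    obtain rfl : t = hitBy D Z n ω := by have := hitBy_le_of_notMem (n := n) hD; omega
    exact hD
  refine le_antisymm (hitBy_le_of_notMem hexit) ?_
  rcases hitBy_notMem_or_eq (D := D) (Z := Z) (n := n + 1) (ω := ω) with hD' | hn
  · exact hitBy_le_of_notMem hD'
  · have := hitBy_le (D := D) (Z := Z) (n := n) (ω := ω)
    omega

lemma min_hitBy_congr (h : ∀ t < r, Z t ω = Z' t ω') :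
    min (hitBy D Z n ω) r = min (hitBy D Z' n ω') r := by
  suffices key : ∀ {Z Z' : ℕ → Ω → α} {ω ω' : Ω}, (∀ t < r, Z t ω = Z' t ω') →
      min (hitBy D Z n ω) r ≤ min (hitBy D Z' n ω') r from
    le_antisymm (key h) (key fun t ht => (h t ht).symm)
  intro Z Z' ω ω' h
  rcases le_or_gt r (hitBy D Z' n ω') with hr | hr
  · exact (min_le_right _ _).trans (le_min hr le_rfl)
  rw [min_eq_left hr.le]
  refine min_le_of_left_le ?_
  rcases hitBy_notMem_or_eq (D := D) (Z := Z') (n := n) (ω := ω') with hD | hn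
  · exact hitBy_le_of_notMem (by rwa [h _ hr])
  · rw [hn]
    exact hitBy_le

lemma hitBy_congr (h : ∀ t < n, Z t ω = Z' t ω') : hitBy D Z n ω = hitBy D Z' n ω' := by
  simpa [hitBy_le] using min_hitBy_congr (D := D) (n := n) h

end Hitting

section Walk

variable {Ω : Type*} {ξ ξ' : ℕ → Ω → ℤ} {x : ℤ} {t : ℕ} {ω ω' : Ω}

lemma walk_succ (ξ : ℕ → Ω → ℤ) (x : ℤ) (t : ℕ) (ω : Ω) :
    walk ξ x (t + 1) ω = walk ξ x t ω + ξ t ω := by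
  simp only [walk, Finset.sum_range_succ, add_assoc]

lemma walk_congr (h : ∀ i < t, ξ i ω = ξ' i ω') : walk ξ x t ω = walk ξ' x t ω' := by
  simp only [walk]
  exact congrArg _ (Finset.sum_congr rfl fun i hi => h i (Finset.mem_range.mp hi))

end Walk

/- `revHitBy D Z T` is definitionally `hitBy` of the time-reversed set `{q | (T - q.1, q.2) ∈ D}`
with cap `T`. -/

section ReversedHitting

variable {Ω α : Type*} {D : Set (ℕ × α)} {Z Z' : ℕ → Ω → α} {ω ω' : Ω} {T r t : ℕ}

lemma revHitBy_le : revHitBy D Z T ω ≤ T := hitBy_le (D := {q | (T - q.1, q.2) ∈ D})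

lemma mem_of_lt_revHitBy (h : t < revHitBy D Z T ω) : (T - t, Z t ω) ∈ D :=
  mem_of_lt_hitBy (D := {q | (T - q.1, q.2) ∈ D}) h

lemma revHitBy_congr (h : ∀ t < T, Z t ω = Z' t ω') : revHitBy D Z T ω = revHitBy D Z' T ω' :=
  hitBy_congr (D := {q | (T - q.1, q.2) ∈ D}) h

lemma min_revHitBy_congr (h : ∀ t < r, Z t ω = Z' t ω') :
    min (revHitBy D Z T ω) r = min (revHitBy D Z' T ω') r :=
  min_hitBy_congr (D := {q | (T - q.1, q.2) ∈ D}) h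

end ReversedHitting

section StoppedWalks

variable {Ω : Type*} {ξ η : ℕ → Ω → ℤ} {D : Set (ℕ × ℤ)} {T s : ℕ} {y : ℤ}

/-- `Y_{τ* ∧ r}`, where `Y` has increments `η` and starts at `y`. -/
def stoppedY (η : ℕ → Ω → ℤ) (D : Set (ℕ × ℤ)) (T : ℕ) (y : ℤ) (r : ℕ) (ω : Ω) : ℤ :=
  walk η y (min (revHitBy D (walk η y) T ω) r) ω

/-- `X_{σ_r}` with `σ_r = ρ^{Root} ∧ (T − τ* ∧ r)`, where `X` has increments `ξ` and starts at
`p.1`. -/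
def stoppedX (ξ η : ℕ → Ω → ℤ) (D : Set (ℕ × ℤ)) (T : ℕ) (y : ℤ) (r : ℕ) (p : ℤ × Ω) : ℤ :=
  walk ξ p.1 (hitBy D (walk ξ p.1) (T - min (revHitBy D (walk η y) T p.2) r) p.2) p.2

lemma stoppedY_eq_add (hs : 0 < s) (ω : Ω) :
    stoppedY η D T y s ω =
      stoppedY η D T y (s - 1) ω + if s ≤ revHitBy D (walk η y) T ω then η (s - 1) ω else 0 := by
  unfold stoppedY
  split_ifs with hτ
  · rw [min_eq_right hτ, min_eq_right (by omega), ← walk_succ, Nat.sub_add_cancel hs]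
  · rw [min_eq_left (by omega), min_eq_left (by omega), add_zero]

open scoped Classical in
lemma stoppedX_pred_eq_add (hs : 0 < s) (p : ℤ × Ω) :
    stoppedX ξ η D T y (s - 1) p =
      stoppedX ξ η D T y s p +
        if s ≤ revHitBy D (walk η y) T p.2 ∧ ∀ u, u ≤ T - s → (u, walk ξ p.1 u p.2) ∈ D
        then ξ (T - s) p.2 else 0 := by
  unfold stoppedX
  by_cases hτ : s ≤ revHitBy D (walk η y) T p.2
  · have hsT : s ≤ T := hτ.trans revHitBy_le
    rw [min_eq_right hτ, min_eq_right (by omega), show T - (s - 1) = T - s + 1 by omega]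
    by_cases hstay : ∀ u, u ≤ T - s → (u, walk ξ p.1 u p.2) ∈ D
    · rw [if_pos ⟨hτ, hstay⟩, hitBy_eq_self fun u hu => hstay u hu.le,
        hitBy_eq_self fun u hu => hstay u (Nat.lt_succ_iff.mp hu), walk_succ]
    · push Not at hstay
      rw [if_neg fun h => by obtain ⟨u, hu, hD⟩ := hstay; exact hD (h.2 u hu),
        hitBy_succ_of_exists_notMem hstay, add_zero]
  · rw [if_neg fun h => hτ h.1, min_eq_left (by omega), min_eq_left (by omega), add_zero]

lemma forall_mem_of_stoppedX_eq_stoppedY (hD : IsRootCont D) (hs : 0 < s) {p : ℤ × Ω}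
    (heq : stoppedX ξ η D T y s p = stoppedY η D T y (s - 1) p.2)
    (hτ : s ≤ revHitBy D (walk η y) T p.2) :
    ∀ u, u ≤ T - s → (u, walk ξ p.1 u p.2) ∈ D := by
  have hsT : s ≤ T := hτ.trans revHitBy_le
  unfold stoppedX stoppedY at heq
  rw [min_eq_right hτ, min_eq_right (by omega)] at heq
  have hY : (T - s + 1, walk η y (s - 1) p.2) ∈ D := by
    have := mem_of_lt_revHitBy (D := D) (show s - 1 < revHitBy D (walk η y) T p.2 by omega)
    rwa [show T - (s - 1) = T - s + 1 by omega] at this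
  refine forall_mem_of_hitBy_mem ?_
  rw [heq]
  exact hD _ _ hY _ (Nat.lt_succ_of_le hitBy_le)

end StoppedWalks

section StoppedWalkCongr

variable {Ω : Type*} {ξ ξ' η η' : ℕ → Ω → ℤ} {D : Set (ℕ × ℤ)} {T r : ℕ} {x y : ℤ} {ω ω' : Ω}

lemma min_revHitBy_walk_congr (h : ∀ i < r - 1, η' i ω' = η i ω) :
    min (revHitBy D (walk η' y) T ω') r = min (revHitBy D (walk η y) T ω) r :=
  min_revHitBy_congr fun _ _ => walk_congr fun i _ => h i (by omega)

lemma stoppedY_congr (h : ∀ i < r, η' i ω' = η i ω) :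
    stoppedY η' D T y r ω' = stoppedY η D T y r ω := by
  unfold stoppedY
  rw [min_revHitBy_walk_congr fun i hi => h i (by omega)]
  exact walk_congr fun i hi => h i (hi.trans_le (min_le_right _ _))

lemma stoppedX_congr
    (hτ : min (revHitBy D (walk η' y) T ω') r = min (revHitBy D (walk η y) T ω) r)
    (hξ : ∀ i < T - min (revHitBy D (walk η y) T ω) r, ξ' i ω' = ξ i ω) :
    stoppedX ξ' η' D T y r (x, ω') = stoppedX ξ η D T y r (x, ω) := by
  unfold stoppedX
  rw [hτ]
  have hwalk : ∀ t ≤ T - min (revHitBy D (walk η y) T ω) r, walk ξ' x t ω' = walk ξ x t ω :=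
    fun t ht => walk_congr fun i hi => hξ i (by omega)
  rw [hitBy_congr fun t ht => hwalk t ht.le]
  exact hwalk _ hitBy_le

end StoppedWalkCongr

section Measurability

variable {Ω α : Type*} [MeasurableSpace Ω] [MeasurableSpace α] {Z : ℕ → Ω → α} {N : Ω → ℕ}

lemma measurable_hitBy [DiscreteMeasurableSpace α] (D : Set (ℕ × α)) (hZ : ∀ t, Measurable (Z t))
    (hN : Measurable N) :
    Measurable fun ω => hitBy D Z (N ω) ω := by
  classical
  have hex : ∀ ω, ∃ t, (t, Z t ω) ∉ D ∨ t = N ω := fun ω => ⟨N ω, Or.inr rfl⟩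
  have hfind : (fun ω => hitBy D Z (N ω) ω) = fun ω => Nat.find (hex ω) := by
    ext ω
    rw [hitBy, Nat.sInf_def (s := {t | (t, Z t ω) ∉ D} ∪ {N ω}) ⟨N ω, Or.inr rfl⟩]
    congr
  rw [hfind]
  refine measurable_find hex fun t => ?_
  rw [Set.ofPred_or]
  exact (hZ t (MeasurableSet.of_discrete (s := {m | (t, m) ∉ D}))).union
    (measurableSet_eq_fun measurable_const hN)

lemma measurable_stopped (hZ : ∀ t, Measurable (Z t)) (hN : Measurable N) :
    Measurable fun ω => Z (N ω) ω :=
  (measurable_from_prod_countable_right (f := fun q : ℕ × Ω => Z q.1 q.2) hZ).comp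
    (hN.prodMk measurable_id)

variable {ξ η : ℕ → Ω → ℤ}

lemma measurable_walk (hξ : ∀ i, Measurable (ξ i)) (x : ℤ) (t : ℕ) : Measurable (walk ξ x t) :=
  measurable_const.add (Finset.measurable_sum _ fun i _ => hξ i)

lemma measurable_revHitBy [DiscreteMeasurableSpace α] (D : Set (ℕ × α))
    (hZ : ∀ t, Measurable (Z t)) (T : ℕ) : Measurable (revHitBy D Z T) :=
  measurable_hitBy {q | (T - q.1, q.2) ∈ D} hZ measurable_const

lemma measurable_stoppedY (hη : ∀ i, Measurable (η i)) (D : Set (ℕ × ℤ)) (T : ℕ) (y : ℤ)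
    (r : ℕ) : Measurable (stoppedY η D T y r) :=
  measurable_stopped (Z := walk η y) (measurable_walk hη y)
    ((measurable_revHitBy D (measurable_walk hη y) T).min measurable_const)

lemma measurable_stoppedX (hξ : ∀ i, Measurable (ξ i)) (hη : ∀ i, Measurable (η i))
    (D : Set (ℕ × ℤ)) (T : ℕ) (y : ℤ) (r : ℕ) : Measurable (stoppedX ξ η D T y r) :=
  measurable_from_prod_countable_right fun x =>
    measurable_stopped (Z := walk ξ x) (measurable_walk hξ x) <|
      measurable_hitBy D (measurable_walk hξ x) <| measurable_const.sub <|
        (measurable_revHitBy D (measurable_walk hη y) T).min measurable_const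

lemma measurableSet_forall_mem_walk (hξ : ∀ i, Measurable (ξ i)) (D : Set (ℕ × ℤ)) (n : ℕ) :
    MeasurableSet {p : ℤ × Ω | ∀ u, u ≤ n → (u, walk ξ p.1 u p.2) ∈ D} :=
  measurableSet_setOfPred.mpr <| Measurable.forall fun u => measurable_const.imp <|
    measurableSet_setOfPred.mp <|
      measurable_from_prod_countable_right (f := fun p : ℤ × Ω => walk ξ p.1 u p.2)
        (fun x => measurable_walk hξ x u) (MeasurableSet.of_discrete (s := {m | (u, m) ∈ D}))

end Measurability

section Defect

def switchDefect (z c : ℤ) (b : Prop) [Decidable b] : ℤ :=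
  |z + if b then c else 0| - (|z| + if z = 0 ∧ b then 1 else 0)

variable {z c : ℤ} {b : Prop} [Decidable b]

lemma switchDefect_of_not (hb : ¬b) : switchDefect z c b = 0 := by
  simp [switchDefect, hb]

lemma switchDefect_neg (hc : c = 1 ∨ c = -1) : switchDefect z (-c) b = -switchDefect z c b := by
  unfold switchDefect
  rcases hc with rfl | rfl <;> split_ifs <;> grind

lemma abs_switchDefect_le (hc : c = 1 ∨ c = -1) : |switchDefect z c b| ≤ 1 := by
  unfold switchDefect
  rcases hc with rfl | rfl <;> split_ifs <;> grind

lemma measurable_switchDefect {β : Type*} [MeasurableSpace β] {z c : β → ℤ} {b : β → Prop}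
    [DecidablePred b] (hz : Measurable z) (hc : Measurable c) (hb : MeasurableSet {q | b q}) :
    Measurable fun q => (switchDefect (z q) (c q) (b q) : ℝ) := by
  classical
  have hg : Measurable fun t : ℤ × ℤ × Prop => (switchDefect t.1 t.2.1 t.2.2 : ℝ) :=
    measurable_of_countable _
  convert hg.comp (hz.prodMk (hc.prodMk (measurableSet_setOfPred.mp hb))) using 1
  ext q
  simp only [Function.comp_apply]
  congr

end Defect

section Flip

variable {ι Ω : Type*} [MeasurableSpace Ω] [DecidableEq ι] {P : Measure Ω} {X : ι → Ω → ℤ}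

def flipAt (j : ι) (v : ι → ℤ) : ι → ℤ := Function.update v j (-v j)

lemma measurable_flipAt (j : ι) : Measurable (flipAt j) := by
  unfold flipAt
  fun_prop

lemma map_flipAt_eq (hX : iIndepFun X P) (hXm : ∀ i, Measurable (X i)) (j : ι)
    (hsymm : P.map (fun ω => -X j ω) = P.map (X j)) :
    P.map (fun ω => flipAt j fun i => X i ω) = P.map (fun ω i => X i ω) := by
  have hflip : (fun ω => flipAt j fun i => X i ω) =
      fun ω i => Function.update (fun _ => id) j (fun m : ℤ => -m) i (X i ω) := by
    ext ω i
    by_cases hi : i = j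
    · subst hi; simp [flipAt]
    · simp [flipAt, Function.update_of_ne hi]
  rw [hflip]
  refine hX.map_fun_comp_eq hXm (fun i => ?_) fun i => ?_
  · by_cases hi : i = j
    · subst hi; simpa using measurable_neg
    · simpa [Function.update_of_ne hi] using measurable_id
  · by_cases hi : i = j
    · subst hi; simpa [Function.comp_def] using hsymm
    · simp [Function.update_of_ne hi]

lemma map_prodMap_flipAt_eq {α : Type*} [MeasurableSpace α] (lam : Measure α) [SFinite lam]
    [SFinite P] (hX : iIndepFun X P) (hXm : ∀ i, Measurable (X i)) (j : ι)
    (hsymm : P.map (fun ω => -X j ω) = P.map (X j)) :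
    (lam.prod P).map (Prod.map id (flipAt j ∘ fun ω i => X i ω)) =
      (lam.prod P).map (Prod.map id fun ω i => X i ω) := by
  have hV : Measurable fun ω i => X i ω := measurable_pi_lambda _ hXm
  rw [← Measure.map_prod_map lam P measurable_id ((measurable_flipAt j).comp hV),
    ← Measure.map_prod_map lam P measurable_id hV]
  exact congrArg _ (map_flipAt_eq hX hXm j hsymm)

end Flip

section FairSign

variable {Ω : Type*} [MeasurableSpace Ω] {P : Measure Ω} [IsProbabilityMeasure P] {c : Ω → ℤ}

lemma FairSign.ae_eq_one_or_neg_one (hc : Measurable c) (h : FairSign P c) :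
    ∀ᵐ ω ∂P, c ω = 1 ∨ c ω = -1 := by
  have hm : MeasurableSet {ω | c ω = 1 ∨ c ω = -1} :=
    (hc (measurableSet_singleton 1)).union (hc (measurableSet_singleton (-1)))
  refine (prob_compl_eq_zero_iff hm).mpr ?_
  have hm' : MeasurableSet {ω | c ω = -1} := hc (measurableSet_singleton (-1))
  rw [Set.ofPred_or, measure_union _ hm', h.1, h.2, ENNReal.add_halves]
  exact Set.disjoint_left.mpr fun ω h1 h2 => by simp_all

lemma FairSign.map_neg (hc : Measurable c) (h : FairSign P c) :
    P.map (fun ω => -c ω) = P.map c := by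
  refine Measure.ext_of_singleton fun k => ?_
  rw [Measure.map_apply (show Measurable fun ω => -c ω from hc.neg) (measurableSet_singleton k),
    Measure.map_apply hc (measurableSet_singleton k)]
  have hneg : (fun ω => -c ω) ⁻¹' {k} = {ω | c ω = -k} := by ext; simp [neg_eq_iff_eq_neg]
  rw [hneg]
  change _ = P {ω | c ω = k}
  by_cases hk : k = 1 ∨ k = -1
  · rcases hk with rfl | rfl
    · exact h.2.trans h.1.symm
    · simpa using h.1.trans h.2.symm
  · have hnull : ∀ m : ℤ, ¬(m = 1 ∨ m = -1) → P {ω | c ω = m} = 0 := fun m hm =>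
      measure_mono_null (fun ω (hω : c ω = m) => by simpa [hω] using hm)
        (ae_iff.mp (h.ae_eq_one_or_neg_one hc))
    rw [hnull k hk, hnull (-k) (by omega)]

end FairSign

section Switching

variable {ι α Ω : Type*} [MeasurableSpace α] [MeasurableSpace Ω] [DecidableEq ι]
  {lam : Measure α} [IsFiniteMeasure lam] {P : Measure Ω} [IsProbabilityMeasure P]
  {X : ι → Ω → ℤ}

theorem integral_abs_add_ite_eq (hX : iIndepFun X P) (hXm : ∀ i, Measurable (X i)) {j : ι}
    (hfair : FairSign P (X j)) {z : α × (ι → ℤ) → ℤ} (hz : Measurable z)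
    {b : α × (ι → ℤ) → Prop} [DecidablePred b] (hb : MeasurableSet {q | b q})
    (hb_flip : ∀ x v, b (x, flipAt j v) ↔ b (x, v))
    (hz_flip : ∀ x v, b (x, v) → z (x, flipAt j v) = z (x, v)) :
    ∫ p, ((|z (p.1, fun i => X i p.2) + if b (p.1, fun i => X i p.2) then X j p.2 else 0|
        : ℤ) : ℝ) ∂(lam.prod P) =
      ∫ p, (((|z (p.1, fun i => X i p.2)| : ℤ) : ℝ) +
        if z (p.1, fun i => X i p.2) = 0 ∧ b (p.1, fun i => X i p.2) then 1 else 0)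
        ∂(lam.prod P) := by
  set V : Ω → ι → ℤ := fun ω i => X i ω
  have hV : Measurable V := measurable_pi_lambda _ hXm
  set Φ : α × (ι → ℤ) → ℝ := fun q => switchDefect (z q) (q.2 j) (b q)
  have hΦ : Measurable Φ :=
    measurable_switchDefect hz ((measurable_pi_apply j).comp measurable_snd) hb
  have hpm : ∀ᵐ p ∂(lam.prod P), X j p.2 = 1 ∨ X j p.2 = -1 :=
    Measure.quasiMeasurePreserving_snd.ae (hfair.ae_eq_one_or_neg_one (hXm j))
  have hneg : ∀ᵐ p ∂(lam.prod P), Φ (Prod.map id (flipAt j ∘ V) p) = -Φ (Prod.map id V p) := by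
    filter_upwards [hpm] with p hp
    have hflip : flipAt j (V p.2) j = -X j p.2 := Function.update_self ..
    simp only [Φ, Prod.map, Function.comp, id, hflip, hb_flip]
    by_cases hpb : b (p.1, V p.2)
    · rw [hz_flip _ _ hpb]
      exact_mod_cast switchDefect_neg hp
    · simp [switchDefect_of_not hpb]
  have hbound : ∀ᵐ p ∂(lam.prod P), ‖Φ (Prod.map id V p)‖ ≤ 1 := by
    filter_upwards [hpm] with p hp
    change |((switchDefect (z (p.1, V p.2)) (X j p.2) (b (p.1, V p.2)) : ℤ) : ℝ)| ≤ 1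
    exact_mod_cast abs_switchDefect_le hp
  have hW : Measurable (Prod.map id V : α × Ω → α × (ι → ℤ)) := measurable_id.prodMap hV
  refine integral_eq_of_integrable_sub ?_ ?_
  · convert Integrable.of_bound (hΦ.comp hW).aestronglyMeasurable 1 hbound using 1
    ext p
    simp [Φ, V, switchDefect, Prod.map]
  · convert integral_eq_zero_of_map_eq_of_ae_neg hW
      (measurable_id.prodMap ((measurable_flipAt j).comp hV))
      (map_prodMap_flipAt_eq lam hX hXm j (hfair.map_neg (hXm j))) hΦ hneg using 2
    ext p
    simp [Φ, V, switchDefect, Prod.map]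

end Switching

section CanonicalWalks

/- At `ω`, the increments `(ξ, η)` are the point `fun i => Sum.elim ξ η i ω` of the path space
`ℕ ⊕ ℕ → ℤ`, whose coordinates are `incrX` and `incrY`. Every quantity built from `(ξ, η)` at `ω` is
definitionally the same quantity built from `(incrX, incrY)` at that point. -/

def incrX (i : ℕ) (v : ℕ ⊕ ℕ → ℤ) : ℤ := v (.inl i)

def incrY (i : ℕ) (v : ℕ ⊕ ℕ → ℤ) : ℤ := v (.inr i)

lemma measurable_incrX (i : ℕ) : Measurable (incrX i) := measurable_pi_apply _

lemma measurable_incrY (i : ℕ) : Measurable (incrY i) := measurable_pi_apply _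

lemma incrX_flipAt_inr (i n : ℕ) (v : ℕ ⊕ ℕ → ℤ) : incrX i (flipAt (.inr n) v) = incrX i v :=
  Function.update_of_ne (Sum.inl_ne_inr (a := i) (b := n)) (-v (.inr n)) v

lemma incrY_flipAt_inl (i n : ℕ) (v : ℕ ⊕ ℕ → ℤ) : incrY i (flipAt (.inl n) v) = incrY i v :=
  Function.update_of_ne (Sum.inr_ne_inl (b := i) (a := n)) (-v (.inl n)) v

lemma incrX_flipAt_inl {i n : ℕ} (h : i ≠ n) (v : ℕ ⊕ ℕ → ℤ) :
    incrX i (flipAt (.inl n) v) = incrX i v :=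
  Function.update_of_ne (Sum.inl_injective.ne h) ..

lemma incrY_flipAt_inr {i n : ℕ} (h : i ≠ n) (v : ℕ ⊕ ℕ → ℤ) :
    incrY i (flipAt (.inr n) v) = incrY i v :=
  Function.update_of_ne (Sum.inr_injective.ne h) ..

variable {D : Set (ℕ × ℤ)} {T n s u : ℕ} {x y : ℤ} (v : ℕ ⊕ ℕ → ℤ)

lemma min_revHitBy_flipAt_inr :
    min (revHitBy D (walk incrY y) T (flipAt (.inr (s - 1)) v)) s =
      min (revHitBy D (walk incrY y) T v) s :=
  min_revHitBy_walk_congr fun _ hi => incrY_flipAt_inr (by omega) v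

lemma revHitBy_flipAt_inl :
    revHitBy D (walk incrY y) T (flipAt (.inl n) v) = revHitBy D (walk incrY y) T v :=
  revHitBy_congr fun _ _ => walk_congr fun i _ => incrY_flipAt_inl i n v

lemma walk_incrX_flipAt_inl (hu : u ≤ n) :
    walk incrX x u (flipAt (.inl n) v) = walk incrX x u v :=
  walk_congr fun _ hi => incrX_flipAt_inl (by omega) v

end CanonicalWalks

section Identities

variable {Ω : Type*} [MeasurableSpace Ω] {P : Measure Ω} {ξ η : ℕ → Ω → ℤ} {lam : Measure ℤ}
  [IsFiniteMeasure lam] {D : Set (ℕ × ℤ)} {T s : ℕ} {y : ℤ}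

lemma IndepSSRWIncrements.measurable_sumElim (h : IndepSSRWIncrements P ξ η) :
    ∀ i, Measurable (Sum.elim ξ η i)
  | .inl i => h.1 i
  | .inr i => h.2.1 i

theorem integral_abs_stoppedX_sub_stoppedY [IsProbabilityMeasure P]
    (h : IndepSSRWIncrements P ξ η) (hs : 0 < s) :
    ∫ p, ((|stoppedX ξ η D T y s p - stoppedY η D T y s p.2| : ℤ) : ℝ) ∂(lam.prod P) =
      ∫ p, (((|stoppedX ξ η D T y s p - stoppedY η D T y (s - 1) p.2| : ℤ) : ℝ) +
        if stoppedX ξ η D T y s p = stoppedY η D T y (s - 1) p.2 ∧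
          s ≤ revHitBy D (walk η y) T p.2 then 1 else 0) ∂(lam.prod P) := by
  have hmeas := h.measurable_sumElim
  obtain ⟨-, -, -, hηf, hind⟩ := h
  have key := integral_abs_add_ite_eq (lam := lam) hind hmeas
    (j := .inr (s - 1)) (hηf (s - 1))
    (z := fun q => stoppedY incrY D T y (s - 1) q.2 - stoppedX incrX incrY D T y s q)
    (b := fun q => s ≤ revHitBy D (walk incrY y) T q.2)
    (((measurable_stoppedY measurable_incrY D T y _).comp measurable_snd).sub
      (measurable_stoppedX measurable_incrX measurable_incrY D T y s))
    (measurableSet_le measurable_const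
      ((measurable_revHitBy D (measurable_walk measurable_incrY y) T).comp measurable_snd))
    (fun _ v => by
      dsimp only
      have := min_revHitBy_flipAt_inr (D := D) (T := T) (s := s) (y := y) v
      omega)
    (fun _ v _ => by
      simp only
      rw [stoppedY_congr fun i hi => incrY_flipAt_inr (by omega) v,
        stoppedX_congr (min_revHitBy_flipAt_inr v) fun i _ => incrX_flipAt_inr i _ v])
  refine Eq.trans ?_ (key.trans ?_) <;> refine integral_congr_ae (ae_of_all _ fun p => ?_)
  · show ((|stoppedX ξ η D T y s p - stoppedY η D T y s p.2| : ℤ) : ℝ) =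
      ((|stoppedY η D T y (s - 1) p.2 - stoppedX ξ η D T y s p +
        if s ≤ revHitBy D (walk η y) T p.2 then η (s - 1) p.2 else 0| : ℤ) : ℝ)
    rw [stoppedY_eq_add hs, abs_sub_comm]
    ring_nf
  · show ((|stoppedY η D T y (s - 1) p.2 - stoppedX ξ η D T y s p| : ℤ) : ℝ) +
      (if stoppedY η D T y (s - 1) p.2 - stoppedX ξ η D T y s p = 0 ∧
        s ≤ revHitBy D (walk η y) T p.2 then 1 else 0) = _
    simp only [abs_sub_comm (stoppedY η D T y (s - 1) p.2), sub_eq_zero,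
      eq_comm (a := stoppedY η D T y (s - 1) p.2)]

open scoped Classical in
theorem integral_abs_stoppedX_pred_sub_stoppedY [IsProbabilityMeasure P]
    (h : IndepSSRWIncrements P ξ η) (hs : 0 < s) :
    ∫ p, ((|stoppedX ξ η D T y (s - 1) p - stoppedY η D T y (s - 1) p.2| : ℤ) : ℝ) ∂(lam.prod P) =
      ∫ p, (((|stoppedX ξ η D T y s p - stoppedY η D T y (s - 1) p.2| : ℤ) : ℝ) +
        if stoppedX ξ η D T y s p = stoppedY η D T y (s - 1) p.2 ∧
          s ≤ revHitBy D (walk η y) T p.2 ∧ (∀ u, u ≤ T - s → (u, walk ξ p.1 u p.2) ∈ D)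
        then 1 else 0) ∂(lam.prod P) := by
  have hmeas := h.measurable_sumElim
  obtain ⟨-, -, hξf, -, hind⟩ := h
  have key := integral_abs_add_ite_eq (lam := lam) hind hmeas
    (j := .inl (T - s)) (hξf (T - s))
    (z := fun q => stoppedX incrX incrY D T y s q - stoppedY incrY D T y (s - 1) q.2)
    (b := fun q => s ≤ revHitBy D (walk incrY y) T q.2 ∧
      ∀ u, u ≤ T - s → (u, walk incrX q.1 u q.2) ∈ D)
    ((measurable_stoppedX measurable_incrX measurable_incrY D T y s).sub
      ((measurable_stoppedY measurable_incrY D T y _).comp measurable_snd))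
    ((measurableSet_le measurable_const
      ((measurable_revHitBy D (measurable_walk measurable_incrY y) T).comp measurable_snd)).inter
      (measurableSet_forall_mem_walk measurable_incrX D (T - s)))
    (fun _ v => by
      simp only [revHitBy_flipAt_inl]
      exact and_congr_right' (forall₂_congr fun u hu => by rw [walk_incrX_flipAt_inl v hu]))
    (fun _ v ⟨hsτ, _⟩ => by
      dsimp only at hsτ ⊢
      rw [stoppedY_congr fun i _ => incrY_flipAt_inl i _ v,
        stoppedX_congr (congrArg (min · s) (revHitBy_flipAt_inl v))
          fun i hi => incrX_flipAt_inl (by omega) v])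
  refine Eq.trans ?_ (key.trans ?_) <;> refine integral_congr_ae (ae_of_all _ fun p => ?_)
  · show ((|stoppedX ξ η D T y (s - 1) p - stoppedY η D T y (s - 1) p.2| : ℤ) : ℝ) =
      ((|stoppedX ξ η D T y s p - stoppedY η D T y (s - 1) p.2 +
        if s ≤ revHitBy D (walk η y) T p.2 ∧ ∀ u, u ≤ T - s → (u, walk ξ p.1 u p.2) ∈ D
        then ξ (T - s) p.2 else 0| : ℤ) : ℝ)
    rw [stoppedX_pred_eq_add hs]
    ring_nf
  · show ((|stoppedX ξ η D T y s p - stoppedY η D T y (s - 1) p.2| : ℤ) : ℝ) +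
      (if stoppedX ξ η D T y s p - stoppedY η D T y (s - 1) p.2 = 0 ∧
        s ≤ revHitBy D (walk η y) T p.2 ∧ (∀ u, u ≤ T - s → (u, walk ξ p.1 u p.2) ∈ D)
        then 1 else 0) = _
    simp only [sub_eq_zero]

end Identities

variable {Ω : Type*} [MeasurableSpace Ω]

open scoped Classical in
theorem one_step_identities_general
    (P : Measure Ω) [IsProbabilityMeasure P] (ξ η : ℕ → Ω → ℤ)
    (h : IndepSSRWIncrements P ξ η)
    (D : Set (ℕ × ℤ)) (hD : IsRootCont D)
    (lam : Measure ℤ) [IsProbabilityMeasure lam]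
    (T : ℕ) (y : ℤ)
    (s : ℕ) (hs0 : 0 < s) :
    (∫ p : ℤ × Ω,
        ((|walk ξ p.1
            (hitBy D (walk ξ p.1) (T - min (revHitBy D (walk η y) T p.2) s) p.2) p.2
          - walk η y (min (revHitBy D (walk η y) T p.2) s) p.2| : ℤ) : ℝ) ∂(lam.prod P)
      = ∫ p : ℤ × Ω,
        (((|walk ξ p.1
            (hitBy D (walk ξ p.1) (T - min (revHitBy D (walk η y) T p.2) s) p.2) p.2
          - walk η y (min (revHitBy D (walk η y) T p.2) (s - 1)) p.2| : ℤ) : ℝ)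
        + (if walk ξ p.1
              (hitBy D (walk ξ p.1) (T - min (revHitBy D (walk η y) T p.2) s) p.2) p.2
              = walk η y (min (revHitBy D (walk η y) T p.2) (s - 1)) p.2
            ∧ s ≤ revHitBy D (walk η y) T p.2
          then (1 : ℝ) else 0)) ∂(lam.prod P)) ∧
    (∫ p : ℤ × Ω,
        ((|walk ξ p.1
            (hitBy D (walk ξ p.1) (T - min (revHitBy D (walk η y) T p.2) (s - 1)) p.2) p.2
          - walk η y (min (revHitBy D (walk η y) T p.2) (s - 1)) p.2| : ℤ) : ℝ) ∂(lam.prod P)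
      = ∫ p : ℤ × Ω,
        (((|walk ξ p.1
            (hitBy D (walk ξ p.1) (T - min (revHitBy D (walk η y) T p.2) s) p.2) p.2
          - walk η y (min (revHitBy D (walk η y) T p.2) (s - 1)) p.2| : ℤ) : ℝ)
        + (if walk ξ p.1
              (hitBy D (walk ξ p.1) (T - min (revHitBy D (walk η y) T p.2) s) p.2) p.2
              = walk η y (min (revHitBy D (walk η y) T p.2) (s - 1)) p.2
            ∧ s ≤ revHitBy D (walk η y) T p.2
            ∧ (∀ u, u ≤ T - s → (u, walk ξ p.1 u p.2) ∈ D)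
          then (1 : ℝ) else 0)) ∂(lam.prod P)) ∧
    (∀ p : ℤ × Ω,
      walk ξ p.1 (hitBy D (walk ξ p.1) (T - min (revHitBy D (walk η y) T p.2) s) p.2) p.2
          = walk η y (min (revHitBy D (walk η y) T p.2) (s - 1)) p.2 →
      s ≤ revHitBy D (walk η y) T p.2 →
      ∀ u, u ≤ T - s → (u, walk ξ p.1 u p.2) ∈ D) :=
  ⟨integral_abs_stoppedX_sub_stoppedY h hs0, integral_abs_stoppedX_pred_sub_stoppedY h hs0,
    fun _ heq hτ => forall_mem_of_stoppedX_eq_stoppedY hD hs0 heq hτ⟩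

open scoped Classical in
/-- for `0 < s < T`, with `τ*_s = τ* ∧ s` and
`σ_s = ρ^{Root} ∧ (T − τ*_s)`, one has
`E^λ_y[|X_{σ_s} − Y_{τ*_s}|] = E^λ_y[|X_{σ_s} − Y_{τ*_{s−1}}| + 1_{X_{σ_s} = Y_{τ*_{s−1}}, τ* ≥ s}]`
and
`E^λ_y[|X_{σ_{s−1}} − Y_{τ*_{s−1}}|]
  = E^λ_y[|X_{σ_s} − Y_{τ*_{s−1}}| + 1_{X_{σ_s} = Y_{τ*_{s−1}}, τ* ≥ s, ρ^{Root} > T−s}]`,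
where on `{X_{σ_s} = Y_{τ*_{s−1}}, τ* ≥ s}` one automatically has `ρ^{Root} > T − s`
(i.e. `(u, X_u) ∈ D` for all `u ≤ T − s`). -/
theorem one_step_identities
    (P : Measure Ω) [IsProbabilityMeasure P] (ξ η : ℕ → Ω → ℤ)
    (h : IndepSSRWIncrements P ξ η)
    (D : Set (ℕ × ℤ)) (hD : IsRootCont D)
    (lam : Measure ℤ) [IsProbabilityMeasure lam] (hlam : FiniteFirstMoment lam)
    (T : ℕ) (y : ℤ)
    (hUI : UniformIntegrable
      (fun (t : ℕ) (p : ℤ × Ω) => ((walk ξ p.1 (hitBy D (walk ξ p.1) t p.2) p.2 : ℤ) : ℝ))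
      1 (lam.prod P))
    (s : ℕ) (hs0 : 0 < s) (hsT : s < T) :
    (∫ p : ℤ × Ω,
        ((|walk ξ p.1
            (hitBy D (walk ξ p.1) (T - min (revHitBy D (walk η y) T p.2) s) p.2) p.2
          - walk η y (min (revHitBy D (walk η y) T p.2) s) p.2| : ℤ) : ℝ) ∂(lam.prod P)
      = ∫ p : ℤ × Ω,
        (((|walk ξ p.1
            (hitBy D (walk ξ p.1) (T - min (revHitBy D (walk η y) T p.2) s) p.2) p.2
          - walk η y (min (revHitBy D (walk η y) T p.2) (s - 1)) p.2| : ℤ) : ℝ)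
        + (if walk ξ p.1
              (hitBy D (walk ξ p.1) (T - min (revHitBy D (walk η y) T p.2) s) p.2) p.2
              = walk η y (min (revHitBy D (walk η y) T p.2) (s - 1)) p.2
            ∧ s ≤ revHitBy D (walk η y) T p.2
          then (1 : ℝ) else 0)) ∂(lam.prod P)) ∧
    (∫ p : ℤ × Ω,
        ((|walk ξ p.1
            (hitBy D (walk ξ p.1) (T - min (revHitBy D (walk η y) T p.2) (s - 1)) p.2) p.2
          - walk η y (min (revHitBy D (walk η y) T p.2) (s - 1)) p.2| : ℤ) : ℝ) ∂(lam.prod P)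
      = ∫ p : ℤ × Ω,
        (((|walk ξ p.1
            (hitBy D (walk ξ p.1) (T - min (revHitBy D (walk η y) T p.2) s) p.2) p.2
          - walk η y (min (revHitBy D (walk η y) T p.2) (s - 1)) p.2| : ℤ) : ℝ)
        + (if walk ξ p.1
              (hitBy D (walk ξ p.1) (T - min (revHitBy D (walk η y) T p.2) s) p.2) p.2
              = walk η y (min (revHitBy D (walk η y) T p.2) (s - 1)) p.2
            ∧ s ≤ revHitBy D (walk η y) T p.2
            ∧ (∀ u, u ≤ T - s → (u, walk ξ p.1 u p.2) ∈ D)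
          then (1 : ℝ) else 0)) ∂(lam.prod P)) ∧
    (∀ p : ℤ × Ω,
      walk ξ p.1 (hitBy D (walk ξ p.1) (T - min (revHitBy D (walk η y) T p.2) s) p.2) p.2
          = walk η y (min (revHitBy D (walk η y) T p.2) (s - 1)) p.2 →
      s ≤ revHitBy D (walk η y) T p.2 →
      ∀ u, u ≤ T - s → (u, walk ξ p.1 u p.2) ∈ D) :=
  one_step_identities_general P ξ η h D hD lam T y s hs0

end SwitchingIdentities
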